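/- arXiv:1410.7202 — 7 statements merged into one kernel-verified Lean document; each statement's English description precedes it below -/
import Mathlib

section
/- Let λ₁, …, λₙ be n mutually distinct complex numbers, a_q = 1 / ∏_{s ≠ q} (λ_q − λ_s), and p_i(x) = ∑_{k=0}^{n−1} λᵢ^k x^k / k! the degree-(n−1) Taylor truncation of e^{λᵢ x}. Then, as an identity of polynomials, a₁ p₁(x) + ⋯ + aₙ pₙ(x) = x^{n−1}/(n−1)!. -/
/-!
The coefficient of `x^k` on the left is `(∑_q λ_q^k / ∏_{s≠q} (λ_q − λ_s)) / k!`. For `k < n` the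
sum is the coefficient of `x^(n−1)` in the Lagrange interpolant of `x^k` at the nodes `λ_q`, which
is `x^k` itself, so it is `1` for `k = n − 1` and `0` otherwise.
-/

open Polynomial Finset

theorem Lagrange.sum_pow_div_prod_sub {F ι : Type*} [Field F] [DecidableEq ι] {s : Finset ι}
    {v : ι → F} (hvs : Set.InjOn v s) {k : ℕ} (hk : k < #s) :
    ∑ i ∈ s, v i ^ k / ∏ j ∈ s.erase i, (v i - v j) = if k = #s - 1 then 1 else 0 := by
  have hdeg : (X ^ k : F[X]).degree < #s := by
    rw [degree_X_pow]; exact_mod_cast hk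
  simpa [coeff_X_pow, eq_comm] using (Lagrange.coeff_eq_sum hvs hdeg).symm

/-- With `a_q = 1 / ∏_{s ≠ q} (λ_q − λ_s)` and `p_i(x) = ∑_{k=0}^{n-1} λ_i^k x^k / k!`
the degree-`(n−1)` Taylor truncation of `e^{λ_i x}`, one has the polynomial identity
`a₁ p₁(x) + ⋯ + aₙ pₙ(x) = x^{n−1}/(n−1)!`. -/
theorem stmt2 (n : ℕ) (hn : 1 ≤ n) (l : Fin n → ℂ) (hl : Function.Injective l)
    (a : Fin n → ℂ)
    (ha : ∀ q, a q = (∏ s ∈ Finset.univ.erase q, (l q - l s))⁻¹)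
    (p : Fin n → Polynomial ℂ)
    (hp : ∀ i, p i = ∑ k ∈ Finset.range n,
      Polynomial.C (l i ^ k / (k.factorial : ℂ)) * Polynomial.X ^ k) :
    ∑ q, Polynomial.C (a q) * p q =
      Polynomial.C (((n - 1).factorial : ℂ))⁻¹ * Polynomial.X ^ (n - 1) := by
  have hsum (k : ℕ) (hk : k ∈ range n) :
      ∑ q, a q * (l q ^ k / k.factorial) = (if k = n - 1 then 1 else 0) / k.factorial := by
    have := Lagrange.sum_pow_div_prod_sub hl.injOn (s := univ) (k := k)
      (by simpa using mem_range.mp hk)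
    simp only [card_univ, Fintype.card_fin] at this
    rw [← this, sum_div]
    exact sum_congr rfl fun q _ => by rw [ha]; ring
  calc ∑ q, C (a q) * p q
      = ∑ k ∈ range n, C (∑ q, a q * (l q ^ k / k.factorial)) * X ^ k := by
        simp only [hp, mul_sum, ← mul_assoc, ← C_mul, map_sum, sum_mul]
        exact sum_comm
    _ = C ((n - 1).factorial : ℂ)⁻¹ * X ^ (n - 1) := by
        rw [sum_congr rfl fun k hk => by rw [hsum k hk],
          sum_eq_single_of_mem (n - 1) (mem_range.mpr (by omega)) fun k _ hk => by simp [hk]]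
        rw [if_pos rfl, one_div]
end

section
/- Let λ₁, …, λₙ be n mutually distinct complex numbers with ε = max(|λ₁|, …, |λₙ|), and let B_{n,q} = ∑_{i=1}^{n} a_i λᵢ^{n−1+q} where a_q = 1 / ∏_{s ≠ q} (λ_q − λ_s). Then for every q ≥ 1 one has |B_{n,q}| ≤ n^q ε^q. -/
open Polynomial Finset

/-!
Reflecting the Lagrange identity `∑ᵢ basisᵢ = 1` (degree `n - 1`) gives the partial-fraction
decomposition `∑ᵢ aᵢ / (1 - λᵢ t) = t ^ (n - 1) / ∏ⱼ (1 - λⱼ t)` in `ℂ⟦t⟧`. Comparing the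
coefficients of `t ^ (n - 1 + q)` shows that `B_{n,q}` is the complete homogeneous symmetric
polynomial `h_q(λ)`: a sum of `multichoose n q ≤ n ^ q` monomials of degree `q`, each of modulus at
most `ε ^ q`.
-/

theorem Nat.multichoose_le_pow (n k : ℕ) : n.multichoose k ≤ n ^ k := by
  have h := Fintype.card_le_of_surjective (Sym.ofVector : List.Vector (Fin n) k → Sym (Fin n) k)
    fun s => ⟨⟨s.1.toList, by simp⟩, Sym.ext (by simp [Sym.ofVector])⟩
  simpa [Sym.card_sym_fin_eq_multichoose] using h

namespace Lagrange

variable {F ι : Type*} [Field F] [DecidableEq ι] {s : Finset ι} {v : ι → F}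

theorem basis_eq_C_nodalWeight_mul_nodal_erase (s : Finset ι) (v : ι → F) (i : ι) :
    Lagrange.basis s v i = C (nodalWeight s v i) * nodal (s.erase i) v := by
  simp_rw [Lagrange.basis, basisDivisor, nodalWeight, prod_mul_distrib, map_prod, nodal]

theorem reflect_nodal (s : Finset ι) (v : ι → F) :
    reflect #s (nodal s v) = ∏ i ∈ s, (1 - C (v i) * X) := by
  induction s using Finset.induction_on with
  | empty => simp [reflect_one]
  | insert i s hi ih =>
    rw [nodal_insert_eq_nodal hi, prod_insert hi, card_insert_of_notMem hi, add_comm,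
      reflect_mul _ _ (natDegree_X_sub_C_le _) natDegree_nodal.le, ih, reflect_sub, reflect_C,
      reflect_one_X]
    ring

theorem sum_C_nodalWeight_mul_prod_one_sub_C_mul_X (hvs : Set.InjOn v s) (hs : s.Nonempty) :
    ∑ i ∈ s, C (nodalWeight s v i) * ∏ j ∈ s.erase i, (1 - C (v j) * X) = X ^ (#s - 1) := by
  have hbasis : ∀ i ∈ s, reflect (#s - 1) (Lagrange.basis s v i) =
      C (nodalWeight s v i) * ∏ j ∈ s.erase i, (1 - C (v j) * X) := fun i hi => by
    rw [basis_eq_C_nodalWeight_mul_nodal_erase, reflect_C_mul, ← card_erase_of_mem hi,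
      reflect_nodal]
  rw [← sum_congr rfl hbasis, ← reflect_one, ← sum_basis hvs hs]
  ext k
  simp only [coeff_reflect, finsetSum_coeff]

end Lagrange

namespace PowerSeries

theorem one_sub_C_mul_X_mul_mk_pow {R : Type*} [CommRing R] (c : R) :
    (1 - C c * X) * mk (c ^ ·) = 1 := by
  have h := congrArg (rescale c) (mk_one_mul_one_sub_eq_one R)
  rw [map_mul, map_sub, map_one, rescale_X, rescale_mk, mul_comm] at h
  simpa only [Pi.one_apply, mul_one] using h

end PowerSeries

section PartialFractions

open Lagrange

variable {F ι : Type*} [Field F] [DecidableEq ι] {s : Finset ι} {v : ι → F}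

theorem mk_sum_nodalWeight_mul_pow (hvs : Set.InjOn v s) (hs : s.Nonempty) :
    PowerSeries.mk (fun m => ∑ i ∈ s, nodalWeight s v i * v i ^ m) =
      PowerSeries.X ^ (#s - 1) * ∏ i ∈ s, PowerSeries.mk (v i ^ ·) := by
  set g : ι → PowerSeries F := fun i => PowerSeries.mk (v i ^ ·)
  have hterm : ∀ i ∈ s,
      (∏ j ∈ s.erase i, (1 - PowerSeries.C (v j) * PowerSeries.X)) * ∏ j ∈ s, g j = g i :=
    fun i hi => by
      rw [← mul_prod_erase s g hi, mul_left_comm, ← prod_mul_distrib,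
        prod_eq_one fun j _ => PowerSeries.one_sub_C_mul_X_mul_mk_pow (v j), mul_one]
  have hpoly := congrArg Polynomial.coeToPowerSeries.ringHom
    (sum_C_nodalWeight_mul_prod_one_sub_C_mul_X hvs hs)
  simp only [map_sum, map_mul, map_prod, map_sub, map_one, map_pow,
    coeToPowerSeries.ringHom_apply, coe_C, coe_X] at hpoly
  calc PowerSeries.mk (fun m => ∑ i ∈ s, nodalWeight s v i * v i ^ m)
      = ∑ i ∈ s, PowerSeries.C (nodalWeight s v i) * g i := by
        ext m
        simp [g, map_sum, PowerSeries.coeff_C_mul]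
    _ = (∑ i ∈ s, PowerSeries.C (nodalWeight s v i) *
          ∏ j ∈ s.erase i, (1 - PowerSeries.C (v j) * PowerSeries.X)) * ∏ j ∈ s, g j := by
        rw [sum_mul]
        exact sum_congr rfl fun i hi => by rw [mul_assoc, hterm i hi]
    _ = PowerSeries.X ^ (#s - 1) * ∏ i ∈ s, g i := by rw [hpoly]

theorem sum_nodalWeight_mul_pow_eq_sum_finsuppAntidiag (hvs : Set.InjOn v s) (hs : s.Nonempty)
    (q : ℕ) :
    ∑ i ∈ s, nodalWeight s v i * v i ^ (#s - 1 + q) =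
      ∑ d ∈ s.finsuppAntidiag q, ∏ i ∈ s, v i ^ d i := by
  have h := congrArg (PowerSeries.coeff (q + (#s - 1))) (mk_sum_nodalWeight_mul_pow hvs hs)
  rw [PowerSeries.coeff_mk, PowerSeries.coeff_X_pow_mul, PowerSeries.coeff_prod, add_comm] at h
  simpa only [PowerSeries.coeff_mk] using h

end PartialFractions

theorem norm_sum_finsuppAntidiag_prod_pow_le {R ι : Type*} [NormedCommRing R] [NormOneClass R]
    [DecidableEq ι] (s : Finset ι) (v : ι → R) {ε : ℝ} (hε : 0 ≤ ε) (hv : ∀ i ∈ s, ‖v i‖ ≤ ε)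
    (q : ℕ) :
    ‖∑ d ∈ s.finsuppAntidiag q, ∏ i ∈ s, v i ^ d i‖ ≤ (#s : ℝ) ^ q * ε ^ q := by
  have hterm : ∀ d ∈ s.finsuppAntidiag q, ‖∏ i ∈ s, v i ^ d i‖ ≤ ε ^ q := fun d hd => by
    rw [← (mem_finsuppAntidiag.mp hd).1, ← prod_pow_eq_pow_sum]
    refine (Finset.norm_prod_le _ _).trans (prod_le_prod (fun _ _ => norm_nonneg _) fun i hi => ?_)
    exact (norm_pow_le _ _).trans (pow_le_pow_left₀ (norm_nonneg _) (hv i hi) _)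
  have hcard : (#(s.finsuppAntidiag q) : ℝ) ≤ (#s : ℝ) ^ q := by
    rw [card_finsuppAntidiag_nat_eq_multichoose]
    exact_mod_cast Nat.multichoose_le_pow _ _
  calc ‖∑ d ∈ s.finsuppAntidiag q, ∏ i ∈ s, v i ^ d i‖
      ≤ #(s.finsuppAntidiag q) • ε ^ q := (norm_sum_le _ _).trans (sum_le_card_nsmul _ _ _ hterm)
    _ ≤ (#s : ℝ) ^ q * ε ^ q := by
        rw [nsmul_eq_mul]
        exact mul_le_mul_of_nonneg_right hcard (pow_nonneg hε q)

theorem stmt6_general (n : ℕ) (l : Fin n → ℂ) (hl : Function.Injective l)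
    (ε : ℝ) (hε : IsGreatest (Set.range fun i => ‖l i‖) ε)
    (a : Fin n → ℂ)
    (ha : ∀ q, a q = (∏ s ∈ Finset.univ.erase q, (l q - l s))⁻¹)
    (q : ℕ) :
    ‖∑ i, a i * l i ^ (n - 1 + q)‖ ≤ (n : ℝ) ^ q * ε ^ q := by
  obtain ⟨⟨i₀, hi₀⟩, hε_ub⟩ := hε
  have ha_eq : a = Lagrange.nodalWeight univ l :=
    funext fun i => by rw [ha, Lagrange.nodalWeight, prod_inv_distrib]
  have h := sum_nodalWeight_mul_pow_eq_sum_finsuppAntidiag hl.injOn ⟨i₀, mem_univ _⟩ q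
  rw [card_univ, Fintype.card_fin] at h
  rw [ha_eq, h]
  simpa using norm_sum_finsuppAntidiag_prod_pow_le univ l (hi₀ ▸ norm_nonneg _)
    (fun i _ => hε_ub ⟨i, rfl⟩) q

/-- With `ε = max(|λ₁|, …, |λₙ|)`, `a_q = 1 / ∏_{s ≠ q} (λ_q − λ_s)` and
`B_{n,q} = ∑_i a_i λ_i^{n-1+q}`, one has `|B_{n,q}| ≤ n^q ε^q` for every `q ≥ 1`. -/
theorem stmt6 (n : ℕ) (hn : 1 ≤ n) (l : Fin n → ℂ) (hl : Function.Injective l)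
    (ε : ℝ) (hε : IsGreatest (Set.range fun i => ‖l i‖) ε)
    (a : Fin n → ℂ)
    (ha : ∀ q, a q = (∏ s ∈ Finset.univ.erase q, (l q - l s))⁻¹)
    (q : ℕ) (hq : 1 ≤ q) :
    ‖∑ i, a i * l i ^ (n - 1 + q)‖ ≤ (n : ℝ) ^ q * ε ^ q :=
  stmt6_general n l hl ε hε a ha q
end

section
/- Let λ₁, …, λₙ be n mutually distinct complex numbers with ε = max(|λ₁|, …, |λₙ|), and let B_{n,q} = ∑_{i=1}^{n} a_i λᵢ^{n−1+q} where a_q = 1 / ∏_{s ≠ q} (λ_q − λ_s). Then for every q ≥ 1 and every real x, |B_{n,q} · x^{n−1+q} / (n−1+q)!| ≤ ε^q |x|^{n−1+q} / (n−1)!. -/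
/-!
`D(m) = ∑ᵢ λᵢ ^ m / ∏_{j ≠ i} (λᵢ - λⱼ)` is the divided difference of `z ↦ z ^ m` at the nodes
`λᵢ`. For `m = #nodes - 1` it is the leading coefficient of the Lagrange interpolant of `X ^ m`,
namely `1`; splitting off one node `λₖ` gives `D(m + 1) = λₖ D(m) + D'(m)`, where `D'` is taken
over the remaining nodes. Induction with Pascal's rule yields `|D(n - 1 + q)| ≤ C(n - 1 + q, q) εᵠ`,
and `C(n - 1 + q, q) / (n - 1 + q)! = 1 / ((n - 1)! q!) ≤ 1 / (n - 1)!`.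
-/

open Finset Polynomial

section DividedDifference

variable {ι K : Type*} [DecidableEq ι]

def dividedDifferencePow [Field K] (s : Finset ι) (v : ι → K) (m : ℕ) : K :=
  ∑ i ∈ s, v i ^ m / ∏ j ∈ s.erase i, (v i - v j)

theorem dividedDifferencePow_card_sub_one [Field K] {s : Finset ι} {v : ι → K}
    (hv : Set.InjOn v s) (hs : s.Nonempty) : dividedDifferencePow s v (#s - 1) = 1 := by
  have hdeg : (X ^ (#s - 1) : K[X]).degree < #s := by
    rw [degree_X_pow]
    exact_mod_cast Nat.sub_lt hs.card_pos one_pos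
  simpa [dividedDifferencePow] using (Lagrange.coeff_eq_sum hv hdeg).symm

theorem dividedDifferencePow_insert_succ [Field K] {s : Finset ι} {v : ι → K} {k : ι}
    (hv : ∀ i ∈ s, v i ≠ v k) (m : ℕ) :
    dividedDifferencePow (insert k s) v (m + 1)
      = v k * dividedDifferencePow (insert k s) v m + dividedDifferencePow s v m := by
  have hk : k ∉ s := fun hk => hv k hk rfl
  have hterm : ∀ i ∈ s, v i ^ (m + 1) / ∏ j ∈ (insert k s).erase i, (v i - v j)
      = v k * (v i ^ m / ∏ j ∈ (insert k s).erase i, (v i - v j))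
        + v i ^ m / ∏ j ∈ s.erase i, (v i - v j) := by
    intro i hi
    have hik : v i - v k ≠ 0 := sub_ne_zero.mpr (hv i hi)
    rw [erase_insert_of_ne (ne_of_mem_of_not_mem hi hk).symm,
      prod_insert fun h => hk (mem_of_mem_erase h)]
    field_simp
    ring
  simp only [dividedDifferencePow, sum_insert hk, erase_insert_eq_erase, erase_eq_of_notMem hk,
    mul_add, mul_sum]
  rw [sum_congr rfl hterm, sum_add_distrib, pow_succ]
  ring

theorem norm_dividedDifferencePow_le [NormedField K] {s : Finset ι} {v : ι → K} {ε : ℝ}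
    (hs : s.Nonempty) (hv : Set.InjOn v s) (hε : ∀ i ∈ s, ‖v i‖ ≤ ε) (q : ℕ) :
    ‖dividedDifferencePow s v (#s - 1 + q)‖ ≤ (#s - 1 + q).choose q * ε ^ q := by
  have hε0 : 0 ≤ ε := let ⟨i, hi⟩ := hs; (norm_nonneg _).trans (hε i hi)
  induction hs using Finset.Nonempty.cons_induction generalizing q with
  | singleton k =>
    simpa [dividedDifferencePow] using
      pow_le_pow_left₀ (norm_nonneg _) (hε k (mem_singleton_self k)) q
  | cons k s hk hs ih =>
    simp only [cons_eq_insert, coe_insert, mem_insert, forall_eq_or_imp] at hv hε ⊢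
    have hvk : ∀ i ∈ s, v i ≠ v k := fun i hi h =>
      hk (hv.eq_iff (by simp [hi]) (by simp) |>.mp h ▸ hi)
    have hcard : #(insert k s) - 1 = #s := by rw [card_insert_of_notMem hk]; rfl
    rw [hcard]
    induction q with
    | zero =>
      simp [← hcard, dividedDifferencePow_card_sub_one (by simpa using hv) (insert_nonempty k s)]
    | succ q ihq =>
      have hs' : #s - 1 + (q + 1) = #s + q := by have := hs.card_pos; omega
      specialize ih (hv.mono (by simp)) hε.2 (q + 1)
      rw [hs'] at ih
      calc ‖dividedDifferencePow (insert k s) v (#s + (q + 1))‖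
          ≤ ‖v k‖ * ‖dividedDifferencePow (insert k s) v (#s + q)‖
              + ‖dividedDifferencePow s v (#s + q)‖ := by
            rw [← add_assoc, dividedDifferencePow_insert_succ hvk, ← norm_mul]
            exact norm_add_le _ _
        _ ≤ ε * ((#s + q).choose q * ε ^ q) + (#s + q).choose (q + 1) * ε ^ (q + 1) := by
            gcongr
            exact hε.1
        _ = (#s + (q + 1)).choose (q + 1) * ε ^ (q + 1) := by
            rw [← add_assoc, Nat.choose_succ_succ', Nat.cast_add]
            ring

end DividedDifference

theorem add_choose_div_factorial_le (a b : ℕ) :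
    ((a + b).choose b : ℝ) / (a + b).factorial ≤ 1 / a.factorial := by
  rw [← Nat.choose_symm_add, Nat.cast_add_choose, div_div_cancel_left' (by positivity), one_div]
  gcongr
  exact le_mul_of_one_le_right (by positivity) (by exact_mod_cast b.factorial_pos)

theorem stmt7_general (n : ℕ) (l : Fin n → ℂ) (hl : Function.Injective l)
    (ε : ℝ) (hε : IsGreatest (Set.range fun i => ‖l i‖) ε)
    (a : Fin n → ℂ)
    (ha : ∀ q, a q = (∏ s ∈ Finset.univ.erase q, (l q - l s))⁻¹)
    (q : ℕ) (x : ℝ) :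
    ‖(∑ i, a i * l i ^ (n - 1 + q)) * (x : ℂ) ^ (n - 1 + q) /
        ((n - 1 + q).factorial : ℂ)‖
      ≤ ε ^ q * |x| ^ (n - 1 + q) / ((n - 1).factorial : ℝ) := by
  obtain ⟨⟨i₀, rfl⟩, hmax⟩ := hε
  have hB : ∑ i, a i * l i ^ (n - 1 + q) = dividedDifferencePow univ l (n - 1 + q) := by
    simp only [dividedDifferencePow, ha, div_eq_inv_mul]
  have hbound := norm_dividedDifferencePow_le (univ_nonempty_iff.mpr ⟨i₀⟩) hl.injOn
    (fun i _ => hmax ⟨i, rfl⟩) q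
  rw [card_univ, Fintype.card_fin] at hbound
  rw [hB, norm_div, norm_mul, norm_pow, Complex.norm_real, Real.norm_eq_abs, Complex.norm_natCast]
  calc ‖dividedDifferencePow univ l (n - 1 + q)‖ * |x| ^ (n - 1 + q) / (n - 1 + q).factorial
      ≤ (n - 1 + q).choose q * ‖l i₀‖ ^ q * |x| ^ (n - 1 + q) / (n - 1 + q).factorial := by
        gcongr
    _ = ‖l i₀‖ ^ q * |x| ^ (n - 1 + q) * ((n - 1 + q).choose q / (n - 1 + q).factorial) := by
        ring
    _ ≤ ‖l i₀‖ ^ q * |x| ^ (n - 1 + q) * (1 / (n - 1).factorial) :=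
        mul_le_mul_of_nonneg_left (add_choose_div_factorial_le _ _) (by positivity)
    _ = ‖l i₀‖ ^ q * |x| ^ (n - 1 + q) / (n - 1).factorial := by ring

/-- With `ε = max(|λ₁|, …, |λₙ|)`, `a_q = 1 / ∏_{s ≠ q} (λ_q − λ_s)` and
`B_{n,q} = ∑_i a_i λ_i^{n-1+q}`, for every `q ≥ 1` and every real `x`:
`|B_{n,q} x^{n-1+q}/(n-1+q)!| ≤ ε^q |x|^{n-1+q}/(n-1)!`. -/
theorem stmt7 (n : ℕ) (hn : 1 ≤ n) (l : Fin n → ℂ) (hl : Function.Injective l)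
    (ε : ℝ) (hε : IsGreatest (Set.range fun i => ‖l i‖) ε)
    (a : Fin n → ℂ)
    (ha : ∀ q, a q = (∏ s ∈ Finset.univ.erase q, (l q - l s))⁻¹)
    (q : ℕ) (hq : 1 ≤ q) (x : ℝ) :
    ‖(∑ i, a i * l i ^ (n - 1 + q)) * (x : ℂ) ^ (n - 1 + q) /
        ((n - 1 + q).factorial : ℂ)‖
      ≤ ε ^ q * |x| ^ (n - 1 + q) / ((n - 1).factorial : ℝ) :=
  stmt7_general n l hl ε hε a ha q x
end

section
/- Let λ₁, …, λₙ be n mutually distinct complex numbers with ε = max(|λ₁|, …, |λₙ|), and let B_{n,q} = ∑_{i=1}^{n} a_i λᵢ^{n−1+q} where a_q = 1 / ∏_{s ≠ q} (λ_q − λ_s). Then for every q ≥ 1, the L²-norm over [−π, π] of the function x ↦ B_{n,q} x^{n−1+q}/(n−1+q)! satisfies ‖B_{n,q} x^{n−1+q}/(n−1+q)!‖_{L²([−π,π])} ≤ C_n (π ε)^q, where C_n = √(2π/(2n+1)) · π^{n−1}/(n−1)!. -/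
/-!
`B_{n,q}` is the divided difference of `x ↦ x ^ (n - 1 + q)` at the nodes `λ_i`. Divided
differences of monomials satisfy `[S](x^(m+1)) = λ_i [S](x^m) + [S \ {i}](x^m)` for `i ∈ S`, and
`[S](x^(|S|-1)) = 1` (leading coefficient of the interpolant), so induction gives
`|B_{n,q}| ≤ C(n-1+q, q) ε^q`. On the other hand `‖x^M‖ = √(2π/(2M+1)) π^M`, and
`C(n-1+q, q) / (n-1+q)! = 1 / ((n-1)! q!)`.
-/

open MeasureTheory

/-- The L² norm on the interval `[-π, π]`: `‖g‖ = (∫_{-π}^{π} |g(x)|² dx)^{1/2}`. -/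
noncomputable def L2norm (g : ℝ → ℂ) : ℝ :=
  Real.sqrt (∫ x in Set.Icc (-Real.pi) Real.pi, ‖g x‖ ^ 2)

open Finset Real

variable {K ι : Type*} [DecidableEq ι]

def divDiffPow [Field K] (s : Finset ι) (v : ι → K) (m : ℕ) : K :=
  ∑ i ∈ s, v i ^ m / ∏ j ∈ s.erase i, (v i - v j)

section Field

variable [Field K] {s : Finset ι} {v : ι → K}

lemma divDiffPow_card_sub_one (hv : Set.InjOn v s) (hs : s.Nonempty) :
    divDiffPow s v (#s - 1) = 1 := by
  have hdeg : (Polynomial.X ^ (#s - 1) : Polynomial K).degree < #s := by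
    rw [Polynomial.degree_X_pow]
    exact_mod_cast Nat.sub_lt hs.card_pos one_pos
  simpa [divDiffPow] using (Lagrange.coeff_eq_sum hv hdeg).symm

lemma divDiffPow_succ (hv : Set.InjOn v s) {i : ι} (hi : i ∈ s) (m : ℕ) :
    divDiffPow s v (m + 1) = v i * divDiffPow s v m + divDiffPow (s.erase i) v m := by
  rw [← sub_eq_iff_eq_add', divDiffPow, divDiffPow, mul_sum, ← sum_sub_distrib,
    ← add_sum_erase _ _ hi, pow_succ', mul_div_assoc, sub_self, zero_add, divDiffPow]
  refine sum_congr rfl fun j hj => ?_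
  have hji : v j - v i ≠ 0 :=
    sub_ne_zero.mpr (hv.ne (mem_of_mem_erase hj) hi (ne_of_mem_erase hj))
  rw [← mul_prod_erase (s.erase j) _ (mem_erase.mpr ⟨(ne_of_mem_erase hj).symm, hi⟩),
    erase_right_comm]
  field_simp
  ring

end Field

section NormedField

variable [NormedField K] {v : ι → K} {ε : ℝ}

theorem norm_divDiffPow_le : ∀ (q k : ℕ) {s : Finset ι}, Set.InjOn v s → #s = k + 1 →
    (∀ i ∈ s, ‖v i‖ ≤ ε) → ‖divDiffPow s v (k + q)‖ ≤ (k + q).choose q * ε ^ q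
  | 0, k, s, hv, hs, _ => by
    have hk : k = #s - 1 := by omega
    simp [hk, divDiffPow_card_sub_one hv (card_pos.mp (by omega))]
  | q + 1, k, s, hv, hs, hε => by
    obtain ⟨i, hi⟩ := card_pos.mp (by omega : 0 < #s)
    have hε0 : 0 ≤ ε := (norm_nonneg _).trans (hε i hi)
    have hcard : #(s.erase i) = k := by rw [card_erase_of_mem hi, hs, Nat.add_sub_cancel]
    have hrest : ‖divDiffPow (s.erase i) v (k + q)‖ ≤ (k + q).choose (q + 1) * ε ^ (q + 1) := by
      cases k with
      | zero => simp [card_eq_zero.mp hcard, divDiffPow]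
      | succ k =>
        have := norm_divDiffPow_le (q + 1) k (hv.mono (erase_subset i s)) hcard
          (fun j hj => hε j (mem_of_mem_erase hj))
        rwa [← add_assoc, add_right_comm] at this
    calc ‖divDiffPow s v (k + (q + 1))‖
        = ‖v i * divDiffPow s v (k + q) + divDiffPow (s.erase i) v (k + q)‖ := by
          rw [← divDiffPow_succ hv hi, add_assoc]
      _ ≤ ‖v i‖ * ‖divDiffPow s v (k + q)‖ + ‖divDiffPow (s.erase i) v (k + q)‖ :=
          (norm_add_le _ _).trans_eq (by rw [norm_mul])
      _ ≤ ε * ((k + q).choose q * ε ^ q) + (k + q).choose (q + 1) * ε ^ (q + 1) := by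
          gcongr
          exacts [hε i hi, norm_divDiffPow_le q k hv hs hε]
      _ = (k + (q + 1)).choose (q + 1) * ε ^ (q + 1) := by
          rw [← add_assoc, Nat.choose_succ_succ']
          push_cast
          ring

end NormedField

lemma integral_Icc_neg_pow_even {a : ℝ} (ha : 0 ≤ a) (M : ℕ) :
    ∫ x in Set.Icc (-a) a, x ^ (2 * M) = 2 * a ^ (2 * M + 1) / (2 * M + 1) := by
  rw [integral_Icc_eq_integral_Ioc, ← intervalIntegral.integral_of_le (by linarith),
    integral_pow, Odd.neg_pow (odd_two_mul_add_one M)]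
  push_cast
  ring

lemma L2norm_const_mul_pow (c : ℂ) (M : ℕ) :
    L2norm (fun x : ℝ => c * (x : ℂ) ^ M) = ‖c‖ * (√(2 * π / (2 * M + 1)) * π ^ M) := by
  have hnorm (x : ℝ) : ‖c * (x : ℂ) ^ M‖ ^ 2 = ‖c‖ ^ 2 * x ^ (2 * M) := by
    rw [norm_mul, norm_pow, Complex.norm_real, Real.norm_eq_abs, mul_pow, ← pow_mul,
      mul_comm M 2, pow_mul, sq_abs, ← pow_mul]
  have hsq : ‖c‖ ^ 2 * (2 * π ^ (2 * M + 1) / (2 * M + 1))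
      = (‖c‖ * π ^ M) ^ 2 * (2 * π / (2 * M + 1)) := by ring
  rw [L2norm]
  simp_rw [hnorm]
  rw [integral_const_mul, integral_Icc_neg_pow_even pi_pos.le, hsq,
    Real.sqrt_mul (by positivity), Real.sqrt_sq (by positivity)]
  ring

theorem stmt8_general (n : ℕ) (l : Fin n → ℂ) (hl : Function.Injective l)
    (ε : ℝ) (hε : IsGreatest (Set.range fun i => ‖l i‖) ε)
    (a : Fin n → ℂ)
    (ha : ∀ q, a q = (∏ s ∈ Finset.univ.erase q, (l q - l s))⁻¹)
    (q : ℕ) (hq : 1 ≤ q) :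
    L2norm (fun x : ℝ => (∑ i, a i * l i ^ (n - 1 + q)) * (x : ℂ) ^ (n - 1 + q) /
        ((n - 1 + q).factorial : ℂ))
      ≤ (Real.sqrt (2 * Real.pi / (2 * n + 1)) * Real.pi ^ (n - 1) /
          ((n - 1).factorial : ℝ)) * (Real.pi * ε) ^ q := by
  obtain ⟨i₀, -⟩ := hε.1
  have hn : 1 ≤ n := Fin.pos i₀
  have hε0 : 0 ≤ ε := (norm_nonneg _).trans (hε.2 ⟨i₀, rfl⟩)
  set M := n - 1 + q
  set B := divDiffPow univ l M
  have hB : ∑ i, a i * l i ^ M = B := by simp_rw [ha, inv_mul_eq_div]; rfl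
  have hBle : ‖B‖ ≤ M.choose q * ε ^ q :=
    norm_divDiffPow_le q (n - 1) hl.injOn (by rw [card_univ, Fintype.card_fin]; omega) fun i _ => hε.2 ⟨i, rfl⟩
  have hchoose : (M.choose q : ℝ) * (n - 1).factorial ≤ M.factorial := by
    rw [← Nat.add_choose_mul_factorial_mul_factorial (n - 1) q]
    exact_mod_cast Nat.le_mul_of_pos_right _ q.factorial_pos
  have hcoef : ‖B‖ / M.factorial ≤ ε ^ q / (n - 1).factorial := by
    rw [div_le_div_iff₀ (by positivity) (by positivity)]
    nlinarith [pow_nonneg hε0 q]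
  have hsqrt : √(2 * π / (2 * M + 1)) ≤ √(2 * π / (2 * n + 1)) := by
    gcongr
    exact_mod_cast (by omega : n ≤ M)
  have hfun : (fun x : ℝ => B * (x : ℂ) ^ M / M.factorial)
      = fun x : ℝ => B / M.factorial * (x : ℂ) ^ M := by
    funext x
    ring
  rw [hB, hfun, L2norm_const_mul_pow, norm_div, Complex.norm_natCast]
  calc ‖B‖ / M.factorial * (√(2 * π / (2 * M + 1)) * π ^ M)
      ≤ ε ^ q / (n - 1).factorial * (√(2 * π / (2 * n + 1)) * π ^ M) := by gcongr
    _ = _ := by rw [pow_add, mul_pow]; ring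

/-- With `ε = max(|λ₁|, …, |λₙ|)`, `a_q = 1 / ∏_{s ≠ q} (λ_q − λ_s)` and
`B_{n,q} = ∑_i a_i λ_i^{n-1+q}`, for every `q ≥ 1` the L²-norm over `[-π, π]` of
`x ↦ B_{n,q} x^{n-1+q}/(n-1+q)!` is at most `C_n (π ε)^q`, where
`C_n = √(2π/(2n+1)) · π^{n-1}/(n-1)!`. -/
theorem stmt8 (n : ℕ) (hn : 1 ≤ n) (l : Fin n → ℂ) (hl : Function.Injective l)
    (ε : ℝ) (hε : IsGreatest (Set.range fun i => ‖l i‖) ε)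
    (a : Fin n → ℂ)
    (ha : ∀ q, a q = (∏ s ∈ Finset.univ.erase q, (l q - l s))⁻¹)
    (q : ℕ) (hq : 1 ≤ q) :
    L2norm (fun x : ℝ => (∑ i, a i * l i ^ (n - 1 + q)) * (x : ℂ) ^ (n - 1 + q) /
        ((n - 1 + q).factorial : ℂ))
      ≤ (Real.sqrt (2 * Real.pi / (2 * n + 1)) * Real.pi ^ (n - 1) /
          ((n - 1).factorial : ℝ)) * (Real.pi * ε) ^ q :=
  stmt8_general n l hl ε hε a ha q hq
end

section
/- Let λ₁, …, λₙ be n mutually distinct complex numbers with ε = max(|λ₁|, …, |λₙ|) satisfying π ε < 1/2, let a_q = 1 / ∏_{s ≠ q} (λ_q − λ_s), and f_n(x) = a₁ e^{λ₁ x} + ⋯ + aₙ e^{λₙ x}. Then ‖f_n(x) − x^{n−1}/(n−1)!‖_{L²([−π,π])} ≤ 2 C_n π ε, where C_n = √(2π/(2n+1)) · π^{n−1}/(n−1)!. -/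
/-!
`f_n` is the divided difference of `λ ↦ exp (λ x)` at the nodes `λ₁, …, λₙ`. Since the nodal
weights of at least two nodes sum to zero, adding a node `μ` acts as the Volterra operator
`f ↦ ∫₀ˣ exp (μ (x - t)) f t dt`, which for `μ = 0` sends `x^(n-1)/(n-1)!` to `x^n/n!`. Comparing
the two recursions gives, by induction on the nodes,
`|f_n(x) - x^(n-1)/(n-1)!| ≤ (exp (ε|x|) - 1) |x|^(n-1)/(n-1)!`, and on `[-π, π]` we have
`ε|x| ≤ 1/2`, hence `exp (ε|x|) - 1 ≤ 2ε|x|`; integrating the square of this bound gives the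
claim.
-/

open MeasureTheory Finset

namespace Lagrange

variable {F ι : Type*} [Field F] [DecidableEq ι] {s : Finset ι} {v : ι → F}

theorem sum_nodalWeight_eq_zero (hvs : Set.InjOn v s) (hs : 2 ≤ #s) :
    ∑ i ∈ s, nodalWeight s v i = 0 := by
  have h := coeff_eq_sum hvs (P := 1) (by
    rw [Polynomial.degree_one]; exact_mod_cast (by omega : 0 < #s))
  rw [Polynomial.coeff_one, if_neg (by omega)] at h
  simpa [nodalWeight, prod_inv_distrib, div_eq_mul_inv] using h.symm

theorem nodalWeight_cons {i j : ι} (hj : j ∉ s) (hi : i ∈ s) :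
    nodalWeight (cons j s hj) v i = (v i - v j)⁻¹ * nodalWeight s v i := by
  rw [nodalWeight, nodalWeight, cons_eq_insert, erase_insert_of_ne (by rintro rfl; exact hj hi),
    prod_insert (fun h => hj (mem_of_mem_erase h))]

end Lagrange

theorem integral_cexp_mul_sub_mul_cexp {a b : ℂ} (hab : a ≠ b) (x : ℝ) :
    ∫ t in (0 : ℝ)..x, Complex.exp (b * (x - t)) * Complex.exp (a * t) =
      (Complex.exp (a * x) - Complex.exp (b * x)) / (a - b) := by
  have hsplit : ∀ t : ℝ, Complex.exp (b * (x - t)) * Complex.exp (a * t) =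
      Complex.exp (b * x) * Complex.exp ((a - b) * t) := fun t => by
    rw [← Complex.exp_add, ← Complex.exp_add]; ring_nf
  simp_rw [hsplit, intervalIntegral.integral_const_mul,
    integral_exp_mul_complex (sub_ne_zero.mpr hab), Complex.ofReal_zero, mul_zero,
    Complex.exp_zero, mul_div_assoc', mul_sub, mul_one, ← Complex.exp_add]
  ring_nf

variable {ι : Type*} [DecidableEq ι]

/-- The divided difference of `z ↦ exp (z * x)` at the nodes `v i`, `i ∈ s`; this is `f_n`. -/
noncomputable def expDivDiff (s : Finset ι) (v : ι → ℂ) (x : ℝ) : ℂ :=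
  ∑ i ∈ s, Lagrange.nodalWeight s v i * Complex.exp (v i * x)

@[fun_prop]
theorem continuous_expDivDiff (s : Finset ι) (v : ι → ℂ) : Continuous (expDivDiff s v) := by
  unfold expDivDiff; fun_prop

theorem expDivDiff_singleton (i : ι) (v : ι → ℂ) (x : ℝ) :
    expDivDiff {i} v x = Complex.exp (v i * x) := by
  simp [expDivDiff, Lagrange.nodalWeight]

theorem expDivDiff_cons {s : Finset ι} {v : ι → ℂ} {j : ι} (hj : j ∉ s) (hs : s.Nonempty)
    (hv : Set.InjOn v (cons j s hj)) (x : ℝ) :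
    expDivDiff (cons j s hj) v x =
      ∫ t in (0 : ℝ)..x, Complex.exp (v j * (x - t)) * expDivDiff s v t := by
  have hne : ∀ i ∈ s, v i ≠ v j := fun i hi h =>
    hj (hv (mem_cons.mpr (.inr hi)) (mem_cons_self j s) h ▸ hi)
  have hsum := Lagrange.sum_nodalWeight_eq_zero hv (by rw [card_cons]; have := hs.card_pos; omega)
  rw [sum_cons, add_comm, ← eq_neg_iff_add_eq_zero] at hsum
  simp_rw [expDivDiff, mul_sum, mul_left_comm (Complex.exp _)]
  have hterm : ∀ i ∈ s, ∫ t in (0 : ℝ)..x,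
      Lagrange.nodalWeight s v i * (Complex.exp (v j * (x - t)) * Complex.exp (v i * t)) =
        Lagrange.nodalWeight (cons j s hj) v i * Complex.exp (v i * x) -
          Lagrange.nodalWeight (cons j s hj) v i * Complex.exp (v j * x) := fun i hi => by
    rw [intervalIntegral.integral_const_mul, integral_cexp_mul_sub_mul_cexp (hne i hi),
      Lagrange.nodalWeight_cons hj hi]
    ring
  rw [intervalIntegral.integral_finsetSum fun i _ =>
      (by fun_prop : Continuous _).intervalIntegrable _ _,
    sum_congr rfl hterm, sum_sub_distrib, ← sum_mul, hsum, sum_cons]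
  ring

theorem norm_cexp_sub_one_le (z : ℂ) : ‖Complex.exp z - 1‖ ≤ Real.exp ‖z‖ - 1 := by
  simpa using Complex.norm_exp_sub_sum_le_exp_norm_sub_sum z 1

theorem norm_cexp_mul_sub_le (z f p : ℂ) {β : ℝ} (h : ‖f - p‖ ≤ (Real.exp β - 1) * ‖p‖) :
    ‖Complex.exp z * f - p‖ ≤ (Real.exp (‖z‖ + β) - 1) * ‖p‖ :=
  calc ‖Complex.exp z * f - p‖ = ‖Complex.exp z * (f - p) + (Complex.exp z - 1) * p‖ := by
        ring_nf
    _ ≤ Real.exp ‖z‖ * ((Real.exp β - 1) * ‖p‖) + (Real.exp ‖z‖ - 1) * ‖p‖ := by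
        refine (norm_add_le _ _).trans ?_
        rw [norm_mul, norm_mul]
        gcongr
        · exact Complex.norm_exp_le_exp_norm z
        · exact norm_cexp_sub_one_le z
    _ = (Real.exp (‖z‖ + β) - 1) * ‖p‖ := by rw [Real.exp_add]; ring

theorem integral_pow_div_factorial (m : ℕ) (x : ℝ) :
    ∫ t in (0 : ℝ)..x, t ^ m / m.factorial = x ^ (m + 1) / (m + 1).factorial := by
  rw [intervalIntegral.integral_div, integral_pow, Nat.factorial_succ]
  push_cast
  field_simp
  ring

theorem integral_ofReal_pow_div_factorial (m : ℕ) (x : ℝ) :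
    ∫ t in (0 : ℝ)..x, (t : ℂ) ^ m / m.factorial = (x : ℂ) ^ (m + 1) / (m + 1).factorial := by
  have h := intervalIntegral.integral_ofReal (μ := volume) (a := 0) (b := x)
    (f := fun t : ℝ => t ^ m / m.factorial)
  push_cast at h
  rw [h, integral_pow_div_factorial]
  push_cast
  rfl

theorem abs_integral_abs_pow_div_factorial (m : ℕ) (x : ℝ) :
    |∫ t in (0 : ℝ)..x, |t| ^ m / m.factorial| = |x| ^ (m + 1) / (m + 1).factorial := by
  have hnonneg : ∀ y : ℝ, 0 ≤ y →
      |∫ t in (0 : ℝ)..y, |t| ^ m / m.factorial| = |y| ^ (m + 1) / (m + 1).factorial := by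
    intro y hy
    rw [intervalIntegral.integral_congr (g := fun t => t ^ m / m.factorial) fun t ht => by
      rw [Set.uIcc_of_le hy] at ht; simp only [abs_of_nonneg ht.1],
      integral_pow_div_factorial, abs_of_nonneg hy, abs_of_nonneg (by positivity)]
  rcases le_total 0 x with hx | hx
  · exact hnonneg x hx
  · have heven : ∫ t in (0 : ℝ)..x, |t| ^ m / m.factorial =
        -∫ t in (0 : ℝ)..-x, |t| ^ m / m.factorial := by
      simpa [abs_neg, intervalIntegral.integral_symm 0 (-x)] using
        intervalIntegral.integral_comp_neg (a := 0) (b := x) fun t : ℝ => |t| ^ m / m.factorial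
    rw [heven, abs_neg, hnonneg (-x) (neg_nonneg.mpr hx), abs_neg]

theorem abs_sub_add_abs_of_mem_uIcc {x t : ℝ} (ht : t ∈ Set.uIcc 0 x) : |x - t| + |t| = |x| := by
  have h := abs_add_eq_add_abs_iff (x - t) t
  rw [sub_add_cancel] at h
  refine (h.mpr ?_).symm
  rcases Set.mem_uIcc.mp ht with ⟨h0, hx⟩ | ⟨hx, h0⟩
  · exact .inl ⟨by linarith, h0⟩
  · exact .inr ⟨by linarith, h0⟩

theorem norm_expDivDiff_sub_le {s : Finset ι} (hs : s.Nonempty) {v : ι → ℂ}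
    (hv : Set.InjOn v s) {b : ℝ} (hb : ∀ i ∈ s, ‖v i‖ ≤ b) {m : ℕ} (hm : #s = m + 1) (x : ℝ) :
    ‖expDivDiff s v x - (x : ℂ) ^ m / m.factorial‖ ≤
      (Real.exp (b * |x|) - 1) * (|x| ^ m / m.factorial) := by
  induction hs using Finset.Nonempty.cons_induction generalizing m x with
  | singleton i =>
    obtain rfl : m = 0 := by simpa using hm.symm
    have hz : ‖v i * x‖ ≤ b * |x| := by
      rw [norm_mul, Complex.norm_real, Real.norm_eq_abs]
      exact mul_le_mul_of_nonneg_right (hb i (mem_singleton_self i)) (abs_nonneg x)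
    simpa [expDivDiff_singleton] using
      (norm_cexp_sub_one_le _).trans (sub_le_sub_right (Real.exp_le_exp.mpr hz) 1)
  | cons j s hj hs ih =>
    obtain ⟨k, hk⟩ : ∃ k, #s = k + 1 := ⟨#s - 1, by have := hs.card_pos; omega⟩
    obtain rfl : m = k + 1 := by rw [card_cons] at hm; omega
    have ih' := ih (hv.mono (by simp)) (fun i hi => hb i (mem_cons_of_mem hi)) hk
    have hB : 0 ≤ Real.exp (b * |x|) - 1 := by
      have := (norm_nonneg (v j)).trans (hb j (mem_cons_self j s))
      simp only [sub_nonneg, Real.one_le_exp_iff]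
      positivity
    have hpt : ∀ t ∈ Set.uIoc 0 x,
        ‖Complex.exp (v j * (x - t)) * expDivDiff s v t - (t : ℂ) ^ k / k.factorial‖ ≤
          (Real.exp (b * |x|) - 1) * (|t| ^ k / k.factorial) := by
      intro t ht
      have hexp : ‖v j * (x - t)‖ + b * |t| ≤ b * |x| := by
        rw [norm_mul, ← Complex.ofReal_sub, Complex.norm_real, Real.norm_eq_abs,
          ← abs_sub_add_abs_of_mem_uIcc (Set.uIoc_subset_uIcc ht), mul_add]
        gcongr
        exact hb j (mem_cons_self j s)
      have hp : ‖(t : ℂ) ^ k / k.factorial‖ = |t| ^ k / k.factorial := by simp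
      have hind := ih' t
      rw [← hp] at hind ⊢
      exact (norm_cexp_mul_sub_le _ _ _ hind).trans (by gcongr)
    rw [expDivDiff_cons hj hs hv, ← integral_ofReal_pow_div_factorial,
      ← intervalIntegral.integral_sub ((by fun_prop : Continuous _).intervalIntegrable _ _)
        ((by fun_prop : Continuous _).intervalIntegrable _ _)]
    calc _ ≤ |∫ t in (0 : ℝ)..x, (Real.exp (b * |x|) - 1) * (|t| ^ k / k.factorial)| :=
          intervalIntegral.norm_integral_le_abs_of_norm_le
            (ae_restrict_of_forall_mem measurableSet_uIoc hpt)
            ((by fun_prop : Continuous _).intervalIntegrable _ _)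
      _ = _ := by
          rw [intervalIntegral.integral_const_mul, abs_mul, abs_integral_abs_pow_div_factorial,
            abs_of_nonneg hB]

open Real in
theorem L2norm_le_of_norm_le_mul_abs_pow {g : ℝ → ℂ} {C : ℝ} (hC : 0 ≤ C) (m : ℕ)
    (hg : ∀ x ∈ Set.Icc (-π) π, ‖g x‖ ≤ C * |x| ^ m) :
    L2norm g ≤ C * π ^ m * √(2 * π / (2 * m + 1)) := by
  have hsq : ∀ x : ℝ, (C * |x| ^ m) ^ 2 = C ^ 2 * x ^ (2 * m) := fun x => by
    rw [mul_pow, pow_abs, sq_abs, ← pow_mul, mul_comm m]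
  have hint : ∫ x in Set.Icc (-π) π, (C * |x| ^ m) ^ 2 =
      (C * π ^ m) ^ 2 * (2 * π / (2 * m + 1)) := by
    simp_rw [hsq]
    rw [integral_Icc_eq_integral_Ioc, ← intervalIntegral.integral_of_le (by linarith [pi_pos]),
      intervalIntegral.integral_const_mul, integral_pow, (odd_two_mul_add_one m).neg_pow]
    push_cast
    ring
  unfold L2norm
  calc √(∫ x in Set.Icc (-π) π, ‖g x‖ ^ 2) ≤ √(∫ x in Set.Icc (-π) π, (C * |x| ^ m) ^ 2) :=
        sqrt_le_sqrt <| integral_mono_of_nonneg (.of_forall fun x => by positivity)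
          (Continuous.integrableOn_Icc (by fun_prop))
          (ae_restrict_of_forall_mem measurableSet_Icc fun x hx =>
            pow_le_pow_left₀ (norm_nonneg _) (hg x hx) 2)
    _ = C * π ^ m * √(2 * π / (2 * m + 1)) := by
        rw [hint, sqrt_mul (sq_nonneg _), sqrt_sq (by positivity)]

/-- With `ε = max(|λ₁|, …, |λₙ|)` satisfying `πε < 1/2`,
`a_q = 1 / ∏_{s ≠ q} (λ_q − λ_s)` and `f_n(x) = ∑_i a_i e^{λ_i x}`, one has
`‖f_n(x) − x^{n-1}/(n-1)!‖_{L²([-π,π])} ≤ 2 C_n π ε` where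
`C_n = √(2π/(2n+1)) · π^{n-1}/(n-1)!`. -/
theorem stmt10 (n : ℕ) (hn : 1 ≤ n) (l : Fin n → ℂ) (hl : Function.Injective l)
    (ε : ℝ) (hε : IsGreatest (Set.range fun i => ‖l i‖) ε)
    (hsmall : Real.pi * ε < 1 / 2)
    (a : Fin n → ℂ)
    (ha : ∀ q, a q = (∏ s ∈ Finset.univ.erase q, (l q - l s))⁻¹) :
    L2norm (fun x : ℝ => (∑ i, a i * Complex.exp (l i * x)) -
        (x : ℂ) ^ (n - 1) / ((n - 1).factorial : ℂ))
      ≤ 2 * (Real.sqrt (2 * Real.pi / (2 * n + 1)) * Real.pi ^ (n - 1) /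
          ((n - 1).factorial : ℝ)) * Real.pi * ε := by
  have hlε : ∀ i, ‖l i‖ ≤ ε := fun i => hε.2 (Set.mem_range_self i)
  have hε0 : 0 ≤ ε := (norm_nonneg _).trans (hlε ⟨0, hn⟩)
  obtain rfl : a = Lagrange.nodalWeight univ l :=
    funext fun q => by rw [ha, Lagrange.nodalWeight, prod_inv_distrib]
  have hcard : #(univ : Finset (Fin n)) = n - 1 + 1 := by simp; omega
  have hpt : ∀ x ∈ Set.Icc (-Real.pi) Real.pi,
      ‖expDivDiff univ l x - (x : ℂ) ^ (n - 1) / (n - 1).factorial‖ ≤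
        2 * ε / (n - 1).factorial * |x| ^ (n - 1 + 1) := by
    intro x hx
    have hεx : ε * |x| ≤ 1 / 2 := by nlinarith [abs_le.mpr ⟨hx.1, hx.2⟩]
    have hεx₀ : 0 ≤ ε * |x| := by positivity
    calc _ ≤ (Real.exp (ε * |x|) - 1) * (|x| ^ (n - 1) / (n - 1).factorial) :=
          norm_expDivDiff_sub_le (univ_nonempty_iff.mpr ⟨⟨0, hn⟩⟩) hl.injOn (fun i _ => hlε i)
            hcard x
      _ ≤ 2 * (ε * |x|) * (|x| ^ (n - 1) / (n - 1).factorial) := by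
          gcongr
          have h := Real.abs_exp_sub_one_le (x := ε * |x|) (by rw [abs_of_nonneg hεx₀]; linarith)
          rwa [abs_of_nonneg hεx₀, abs_of_nonneg (by simpa using hεx₀)] at h
      _ = 2 * ε / (n - 1).factorial * |x| ^ (n - 1 + 1) := by ring
  calc _ ≤ 2 * ε / (n - 1).factorial * Real.pi ^ (n - 1 + 1) *
        √(2 * Real.pi / (2 * (n - 1 + 1 : ℕ) + 1)) :=
        L2norm_le_of_norm_le_mul_abs_pow (by positivity) (n - 1 + 1) hpt
    _ = _ := by rw [pow_succ, Nat.sub_add_cancel hn]; ring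
end

section
/- (Theorem 3.1) Fix an integer n ≥ 1. For every δ > 0 there exists ε₀ > 0 such that: whenever λ₁, …, λₙ are mutually distinct complex numbers with |λᵢ| < ε₀ for all i, there exist complex coefficients c₁, …, cₙ such that the function f(x) = ∑_{i=1}^{n} cᵢ e^{λᵢ x}, which belongs to the span of e^{λ₁ x}, …, e^{λₙ x} in L²([−π, π]), satisfies ‖f(x) − x^{n−1}‖_{L²([−π,π])} < δ. -/
open MeasureTheory

/-!
Take `cᵢ = (n-1)! / ∏_{j ≠ i} (λᵢ - λⱼ)`, so that `∑ cᵢ e^{λᵢ x}` is `(n-1)!` times the divided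
difference of `z ↦ e^{xz}` at the nodes `λᵢ`. By partial fractions and the residue theorem it equals
`(n-1)!/(2πi) ∮ e^{xz} / ∏ᵢ (z - λᵢ) dz` over the unit circle, while by Cauchy's formula for
derivatives `x^{n-1}` is the same integral with all poles moved to `0`. On the unit circle the two
integrands differ by `O(max |λᵢ|)` uniformly for `|x| ≤ π`, so the difference is uniformly small on
`[-π, π]`, hence small in `L²`.
-/

open Complex Finset Metric Lagrange
open scoped Real Nat

theorem Finset.norm_prod_sub_prod_le {ι R : Type*} [NormedCommRing R] [NormOneClass R]
    (s : Finset ι) {f g : ι → R} {C : ℝ} (hC : 1 ≤ C) (hf : ∀ i ∈ s, ‖f i‖ ≤ C)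
    (hg : ∀ i ∈ s, ‖g i‖ ≤ C) :
    ‖∏ i ∈ s, f i - ∏ i ∈ s, g i‖ ≤ C ^ #s * ∑ i ∈ s, ‖f i - g i‖ := by
  induction s using Finset.cons_induction with
  | empty => simp
  | cons a s ha ih =>
    rw [forall_mem_cons] at hf hg
    have hprod : ‖∏ i ∈ s, g i‖ ≤ C ^ #s :=
      (norm_prod_le s g).trans <|
        (prod_le_prod (fun _ _ => norm_nonneg _) hg.2).trans_eq (prod_const C)
    have hpow : C ^ #s ≤ C ^ (#s + 1) := pow_le_pow_right₀ hC (Nat.le_succ _)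
    rw [prod_cons, prod_cons, card_cons, sum_cons,
      show f a * ∏ i ∈ s, f i - g a * ∏ i ∈ s, g i
        = f a * (∏ i ∈ s, f i - ∏ i ∈ s, g i) + (f a - g a) * ∏ i ∈ s, g i by ring]
    calc _ ≤ ‖f a‖ * ‖∏ i ∈ s, f i - ∏ i ∈ s, g i‖ + ‖f a - g a‖ * ‖∏ i ∈ s, g i‖ :=
          (norm_add_le _ _).trans (add_le_add (norm_mul_le _ _) (norm_mul_le _ _))
      _ ≤ C * (C ^ #s * ∑ i ∈ s, ‖f i - g i‖) + ‖f a - g a‖ * C ^ (#s + 1) := by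
          gcongr
          · exact hf.1
          · exact ih hf.2 hg.2
          · exact hprod.trans hpow
      _ = C ^ (#s + 1) * (‖f a - g a‖ + ∑ i ∈ s, ‖f i - g i‖) := by ring

theorem norm_inv_sub_sub_inv_le {𝕜 : Type*} [NormedField 𝕜] {z w : 𝕜} {ε : ℝ} (hz : ‖z‖ = 1)
    (hε : ε ≤ 1 / 2) (hw : ‖w‖ ≤ ε) :
    ‖(z - w)⁻¹‖ ≤ 2 ∧ ‖(z - w)⁻¹ - z⁻¹‖ ≤ 2 * ε := by
  have hzw : 1 / 2 ≤ ‖z - w‖ := by linarith [norm_sub_norm_le z w]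
  have hz0 : z ≠ 0 := norm_ne_zero_iff.mp (by rw [hz]; norm_num)
  have hzw0 : z - w ≠ 0 := norm_ne_zero_iff.mp (by linarith)
  have hinv : ‖(z - w)⁻¹‖ ≤ 2 := by
    rw [norm_inv]
    exact inv_le_of_inv_le₀ (by norm_num) (by simpa using hzw)
  refine ⟨hinv, ?_⟩
  rw [inv_sub_inv hzw0 hz0, sub_sub_cancel, norm_div, norm_mul, hz, mul_one, div_eq_mul_inv,
    ← norm_inv, mul_comm]
  exact mul_le_mul hinv hw (norm_nonneg _) zero_le_two

theorem norm_inv_prod_sub_sub_inv_pow_le {𝕜 ι : Type*} [NormedField 𝕜] {s : Finset ι}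
    {v : ι → 𝕜} {z : 𝕜} {ε : ℝ} (hz : ‖z‖ = 1) (hε : ε ≤ 1 / 2) (hv : ∀ i ∈ s, ‖v i‖ ≤ ε) :
    ‖(∏ i ∈ s, (z - v i))⁻¹ - (z ^ #s)⁻¹‖ ≤ 2 ^ #s * (#s * (2 * ε)) := by
  rw [← prod_inv_distrib, ← inv_pow, ← prod_const]
  refine (s.norm_prod_sub_prod_le one_le_two
    (fun i hi => (norm_inv_sub_sub_inv_le hz hε (hv i hi)).1) (fun i _ => by simp [hz])).trans ?_
  gcongr
  simpa using sum_le_card_nsmul s _ _ fun i hi => (norm_inv_sub_sub_inv_le hz hε (hv i hi)).2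

theorem inv_prod_sub_eq_sum_nodalWeight_mul_inv_sub {F ι : Type*} [Field F] [DecidableEq ι]
    {s : Finset ι} {v : ι → F} {x : F} (hvs : Set.InjOn v s) (hs : s.Nonempty)
    (hx : ∀ i ∈ s, x ≠ v i) :
    (∏ i ∈ s, (x - v i))⁻¹ = ∑ i ∈ s, nodalWeight s v i * (x - v i)⁻¹ := by
  rw [← eval_nodal]
  refine inv_eq_of_mul_eq_one_right ?_
  simpa only [Pi.one_apply, interpolate_one hvs hs, Polynomial.eval_one, mul_one] using
    (eval_interpolate_not_at_node 1 hx).symm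

section CircleIntegral

variable {E ι : Type*} [NormedAddCommGroup E] [NormedSpace ℂ E]

theorem DifferentiableOn.circleIntegral_inv_prod_sub_smul [CompleteSpace E] [DecidableEq ι]
    {f : ℂ → E} {c : ℂ} {R : ℝ} (hf : DifferentiableOn ℂ f (closedBall c R)) {s : Finset ι}
    {v : ι → ℂ} (hvs : Set.InjOn v s) (hs : s.Nonempty) (hv : ∀ i ∈ s, v i ∈ ball c R) :
    ∮ z in C(c, R), (∏ i ∈ s, (z - v i))⁻¹ • f z
      = (2 * π * I : ℂ) • ∑ i ∈ s, nodalWeight s v i • f (v i) := by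
  have hR : 0 ≤ R := by obtain ⟨i, hi⟩ := hs; exact dist_nonneg.trans (hv i hi).le
  have hne : ∀ i ∈ s, ∀ z ∈ sphere c R, z - v i ≠ 0 := fun i hi z hz =>
    sub_ne_zero.2 fun h => (mem_ball.1 (hv i hi)).ne (h ▸ mem_sphere.1 hz)
  have hfs : ContinuousOn f (sphere c R) := hf.continuousOn.mono sphere_subset_closedBall
  calc ∮ z in C(c, R), (∏ i ∈ s, (z - v i))⁻¹ • f z
      = ∮ z in C(c, R), ∑ i ∈ s, nodalWeight s v i • (z - v i)⁻¹ • f z := by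
        refine circleIntegral.integral_congr hR fun z hz => ?_
        simp only [smul_smul, ← sum_smul]
        rw [inv_prod_sub_eq_sum_nodalWeight_mul_inv_sub hvs hs fun i hi h =>
          hne i hi z hz (sub_eq_zero.2 h)]
    _ = ∑ i ∈ s, nodalWeight s v i • ∮ z in C(c, R), (z - v i)⁻¹ • f z := by
        rw [circleIntegral.integral_fun_sum (f := fun i z => nodalWeight s v i • (z - v i)⁻¹ • f z)
          fun i hi => ContinuousOn.circleIntegrable hR <| continuousOn_const.smul <|
            ((continuousOn_id.sub continuousOn_const).inv₀ (hne i hi)).smul hfs]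
        simp only [circleIntegral.integral_smul]
    _ = (2 * π * I : ℂ) • ∑ i ∈ s, nodalWeight s v i • f (v i) := by
        rw [smul_sum]
        refine sum_congr rfl fun i hi => ?_
        rw [hf.circleIntegral_sub_inv_smul (hv i hi), smul_comm]

theorem norm_circleIntegral_inv_prod_sub_smul_sub_le {f : ℂ → E} {s : Finset ι} {v : ι → ℂ}
    {ε M : ℝ} (hf : ContinuousOn f (sphere 0 1)) (hM : ∀ z ∈ sphere (0 : ℂ) 1, ‖f z‖ ≤ M)
    (hε : ε ≤ 1 / 2) (hv : ∀ i ∈ s, ‖v i‖ ≤ ε) :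
    ‖(∮ z in C(0, 1), (∏ i ∈ s, (z - v i))⁻¹ • f z) - ∮ z in C(0, 1), (z ^ #s)⁻¹ • f z‖
      ≤ 2 * π * (2 ^ #s * (#s * (2 * ε)) * M) := by
  have hz : ∀ z ∈ sphere (0 : ℂ) 1, ‖z‖ = 1 := fun z hz => by simpa using hz
  have hint₁ : CircleIntegrable (fun z => (∏ i ∈ s, (z - v i))⁻¹ • f z) 0 1 := by
    refine ContinuousOn.circleIntegrable zero_le_one <|
      ContinuousOn.smul (f := fun z => (∏ i ∈ s, (z - v i))⁻¹) ?_ hf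
    refine ContinuousOn.inv₀ (by fun_prop) fun z hz' => prod_ne_zero_iff.2 fun i hi h => ?_
    have h1 := hz z hz'
    rw [sub_eq_zero.1 h] at h1
    linarith [hv i hi]
  have hint₂ : CircleIntegrable (fun z => (z ^ #s)⁻¹ • f z) 0 1 :=
    ContinuousOn.circleIntegrable zero_le_one <| ((continuousOn_pow _).inv₀
      fun z hz' => pow_ne_zero _ (norm_ne_zero_iff.1 (by rw [hz z hz']; norm_num))).smul hf
  rw [← circleIntegral.integral_sub hint₁ hint₂]
  refine (circleIntegral.norm_integral_le_of_norm_le_const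
    (C := 2 ^ #s * (#s * (2 * ε)) * M) zero_le_one fun z hz' => ?_).trans_eq (by ring)
  have hdiff := norm_inv_prod_sub_sub_inv_pow_le (hz z hz') hε hv
  rw [← sub_smul, norm_smul]
  exact mul_le_mul hdiff (hM z hz') (norm_nonneg _) ((norm_nonneg _).trans hdiff)

end CircleIntegral

theorem norm_factorial_mul_sum_nodalWeight_mul_exp_sub_pow_le {ι : Type*} [DecidableEq ι]
    {s : Finset ι} {v : ι → ℂ} {k : ℕ} (hsk : #s = k + 1) (hvs : Set.InjOn v s) {ε : ℝ}
    (hε : ε ≤ 1 / 2) (hv : ∀ i ∈ s, ‖v i‖ ≤ ε) {x : ℂ} {r : ℝ} (hx : ‖x‖ ≤ r) :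
    ‖k ! * ∑ i ∈ s, nodalWeight s v i * exp (v i * x) - x ^ k‖
      ≤ k ! * (2 ^ (k + 1) * ((k + 1) * (2 * ε)) * Real.exp r) := by
  set e : ℂ → ℂ := fun z => exp (x * z)
  have he : Differentiable ℂ e := by fun_prop
  have hs : s.Nonempty := card_pos.1 (by omega)
  have hv1 : ∀ i ∈ s, v i ∈ ball (0 : ℂ) 1 := fun i hi =>
    mem_ball_zero_iff.2 ((hv i hi).trans_lt (by linarith))
  have hnodes : ∮ z in C(0, 1), (∏ i ∈ s, (z - v i))⁻¹ • e z
      = (2 * π * I : ℂ) • ∑ i ∈ s, nodalWeight s v i * exp (v i * x) := by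
    rw [he.differentiableOn.circleIntegral_inv_prod_sub_smul hvs hs hv1]
    simp only [e, smul_eq_mul, mul_comm x]
  have hcenter : ∮ z in C(0, 1), (z ^ (k + 1))⁻¹ • e z = (2 * π * I / k ! : ℂ) • x ^ k := by
    simpa [e, iteratedDeriv_cexp_const_mul] using
      he.differentiableOn.circleIntegral_one_div_sub_center_pow_smul (c := 0) one_pos k
  have he_le : ∀ z ∈ sphere (0 : ℂ) 1, ‖e z‖ ≤ Real.exp r := fun z hz => by
    rw [norm_exp]
    refine Real.exp_le_exp.2 <| (re_le_norm _).trans ?_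
    rw [norm_mul, show ‖z‖ = 1 by simpa using hz, mul_one]
    exact hx
  have hdiff := norm_circleIntegral_inv_prod_sub_smul_sub_le he.continuous.continuousOn he_le hε hv
  rw [hsk, hnodes, hcenter, smul_eq_mul, smul_eq_mul] at hdiff
  set S := ∑ i ∈ s, nodalWeight s v i * exp (v i * x)
  have hk : (k ! : ℂ) ≠ 0 := Nat.cast_ne_zero.2 k.factorial_ne_zero
  have hkey : (k ! : ℂ) * S - x ^ k
      = (k ! / (2 * π * I) : ℂ) * (2 * π * I * S - 2 * π * I / k ! * x ^ k) := by
    field_simp [two_pi_I_ne_zero]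
  have hnorm : ‖(k ! / (2 * π * I) : ℂ)‖ = k ! / (2 * π) := by
    simp [abs_of_pos Real.pi_pos]
  rw [hkey, norm_mul, hnorm]
  calc k ! / (2 * π) * ‖_‖
      ≤ k ! / (2 * π) * (2 * π * (2 ^ (k + 1) * ((k + 1) * (2 * ε)) * Real.exp r)) := by
        push_cast at hdiff
        gcongr
    _ = _ := by field_simp

theorem L2norm_le_of_forall_norm_le {g : ℝ → ℂ} {M : ℝ} (hM : 0 ≤ M)
    (hg : ∀ x ∈ Set.Icc (-π) π, ‖g x‖ ≤ M) : L2norm g ≤ √(2 * π) * M := by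
  have hint : ∫ x in Set.Icc (-π) π, ‖g x‖ ^ 2 ≤ 2 * π * M ^ 2 := by
    calc ∫ x in Set.Icc (-π) π, ‖g x‖ ^ 2 ≤ ∫ _ in Set.Icc (-π) π, M ^ 2 := by
          refine integral_mono_of_nonneg (Filter.Eventually.of_forall fun x => by positivity)
            (integrable_const _) ((ae_restrict_iff' measurableSet_Icc).2 ?_)
          exact Filter.Eventually.of_forall fun x hx =>
            pow_le_pow_left₀ (norm_nonneg _) (hg x hx) 2
      _ = 2 * π * M ^ 2 := by
          rw [setIntegral_const, smul_eq_mul, measureReal_def, Real.volume_Icc,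
            ENNReal.toReal_ofReal (by linarith [Real.pi_pos])]
          ring
  calc L2norm g ≤ √(2 * π * M ^ 2) := Real.sqrt_le_sqrt hint
    _ = √(2 * π) * M := by rw [Real.sqrt_mul (by positivity), Real.sqrt_sq hM]

/-- Theorem 3.1: for every `δ > 0` there is `ε₀ > 0` such that whenever
`λ₁, …, λₙ` are mutually distinct complex numbers with `|λᵢ| < ε₀`, some linear
combination `f(x) = ∑ cᵢ e^{λᵢ x}` (an element of the span of the exponentials)
satisfies `‖f(x) − x^{n-1}‖_{L²([-π,π])} < δ`. -/
theorem stmt11 (n : ℕ) (hn : 1 ≤ n) :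
    ∀ δ > (0 : ℝ), ∃ ε₀ > (0 : ℝ), ∀ l : Fin n → ℂ, Function.Injective l →
      (∀ i, ‖l i‖ < ε₀) →
      ∃ c : Fin n → ℂ,
        L2norm (fun x : ℝ =>
            (∑ i, c i * Complex.exp (l i * x)) - (x : ℂ) ^ (n - 1)) < δ := by
  obtain ⟨k, rfl⟩ := Nat.exists_eq_add_of_le' hn
  intro δ hδ
  set C : ℝ := √(2 * π) * (k ! * (2 ^ (k + 1) * ((k + 1) * 2) * Real.exp π))
  have hC : 0 < C := by positivity
  obtain ⟨ε₀, hε₀, hε₀_le_half, hε₀_le⟩ : ∃ ε₀ > 0, ε₀ ≤ 1 / 2 ∧ ε₀ ≤ δ / (2 * C) :=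
    ⟨min (1 / 2) (δ / (2 * C)), by positivity, min_le_left _ _, min_le_right _ _⟩
  refine ⟨ε₀, hε₀, fun l hl hlε => ⟨fun i => k ! * nodalWeight univ l i, ?_⟩⟩
  have hpointwise : ∀ x ∈ Set.Icc (-π) π,
      ‖∑ i, k ! * nodalWeight univ l i * exp (l i * x) - (x : ℂ) ^ (k + 1 - 1)‖
        ≤ k ! * (2 ^ (k + 1) * ((k + 1) * (2 * ε₀)) * Real.exp π) := fun x hx => by
    simpa [mul_sum, mul_assoc] using norm_factorial_mul_sum_nodalWeight_mul_exp_sub_pow_le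
      (card_fin _) hl.injOn hε₀_le_half (fun i _ => (hlε i).le) (x := x)
      (by simpa [abs_le] using hx)
  calc L2norm _ ≤ √(2 * π) * (k ! * (2 ^ (k + 1) * ((k + 1) * (2 * ε₀)) * Real.exp π)) :=
        L2norm_le_of_forall_norm_le (by positivity) hpointwise
    _ = C * ε₀ := by ring
    _ ≤ C * (δ / (2 * C)) := by gcongr
    _ < δ := by field_simp; linarith
end

section
/- (Theorem 3.3) Fix an integer n ≥ 1. For every δ > 0 there exists ε₀ > 0 such that: whenever λ₁, …, λₙ are mutually distinct complex numbers with |λᵢ| < ε₀ for all i, there exist functions f₁, …, fₙ forming a basis of the n-dimensional subspace L = Span(e^{λ₁ x}, …, e^{λₙ x}) of L²([−π, π]) and satisfying ‖f_s(x) − x^{s−1}‖_{L²([−π,π])} < δ for every s = 1, …, n. Consequently, as all λᵢ → 0 the subspaces L converge, in the sense of convergence of subspaces of a Hilbert space, to the subspace M = Span(1, x, …, x^{n−1}). -/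
/-!
The basis is `f_s = s! · [λ₀, …, λ_s] e^{λx}`, where `[λ₀, …, λ_s] g` is the divided difference of
`λ ↦ g λ` at the first `s + 1` exponents. It is a combination of `e^{λ₀x}, …, e^{λ_s x}` whose last
coefficient is nonzero, so the `f_s` span the same space as the exponentials. Expanding the
exponential in powers of `λ`, the divided difference of `λ ↦ λ^k` vanishes for `k < s` and is the
complete homogeneous symmetric polynomial `h_{k-s}(λ₀, …, λ_s)` for `k ≥ s`, a sum of `binom(k, s)`
monomials. Hence `|f_s(x) - x^s| ≤ |x|^s (e^{|x|ε} - 1)` whenever all `|λᵢ| ≤ ε`.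
-/

open MeasureTheory Filter Topology Submodule Finset Lagrange
open scoped Nat

section CompleteSymm

variable {R : Type*} [CommSemiring R]

/-- `completeSymm μ r` is the complete homogeneous symmetric polynomial of degree `r` evaluated
at `μ`; the recursion separates the monomials that do not contain `μ 0`. -/
def completeSymm : {m : ℕ} → (Fin m → R) → ℕ → R
  | 0, _, 0 => 1
  | 0, _, _ + 1 => 0
  | _ + 1, _, 0 => 1
  | _ + 1, μ, r + 1 => completeSymm (Fin.tail μ) (r + 1) + μ 0 * completeSymm μ r

lemma completeSymm_succ {m : ℕ} (μ : Fin (m + 1) → R) (r : ℕ) :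
    completeSymm μ (r + 1) = completeSymm (Fin.tail μ) (r + 1) + μ 0 * completeSymm μ r := by
  rw [completeSymm]

@[simp]
lemma completeSymm_zero {m : ℕ} (μ : Fin m → R) : completeSymm μ 0 = 1 := by
  cases m <;> rw [completeSymm]

lemma completeSymm_fin_one (μ : Fin 1 → R) (r : ℕ) : completeSymm μ r = μ 0 ^ r := by
  induction r with
  | zero => rw [completeSymm_zero, pow_zero]
  | succ r ih => rw [completeSymm_succ, ih, completeSymm, zero_add, pow_succ']

lemma norm_completeSymm_le {R : Type*} [SeminormedCommRing R] [NormOneClass R] {m : ℕ}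
    (μ : Fin m → R) {ε : ℝ} (hε : 0 ≤ ε) (hμ : ∀ i, ‖μ i‖ ≤ ε) (r : ℕ) :
    ‖completeSymm μ r‖ ≤ m.multichoose r * ε ^ r := by
  induction m, μ, r using completeSymm.induct with
  | case1 | case3 => simp
  | case2 => simp [completeSymm]
  | case4 m r μ ih₁ ih₂ =>
    rw [completeSymm_succ, Nat.multichoose_succ_succ, Nat.cast_add, add_mul]
    refine (norm_add_le _ _).trans (add_le_add (ih₁ fun i => hμ _) ?_)
    calc ‖μ 0 * completeSymm μ r‖ ≤ ε * ((m + 1).multichoose r * ε ^ r) :=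
          (norm_mul_le _ _).trans (mul_le_mul (hμ 0) (ih₂ hμ) (norm_nonneg _) hε)
      _ = (m + 1).multichoose r * ε ^ (r + 1) := by ring

end CompleteSymm

section DividedDifference

variable {K M : Type*} [Field K] [AddCommGroup M] [Module K M] {m : ℕ}

def divDiff (μ : Fin m → K) (g : K → M) : M :=
  ∑ i, nodalWeight univ μ i • g (μ i)

lemma nodalWeight_succAbove (μ : Fin (m + 1) → K) (p : Fin (m + 1)) (i : Fin m) :
    nodalWeight univ μ (p.succAbove i)
      = (μ (p.succAbove i) - μ p)⁻¹ * nodalWeight univ (μ ∘ p.succAbove) i := by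
  rw [nodalWeight, Fin.univ_succAbove m p, erase_cons_of_ne _ (p.succAbove_ne i).symm,
    prod_cons, ← Fin.coe_succAboveEmb, ← map_erase, prod_map]
  rfl

lemma divDiff_sub_node_smul {μ : Fin (m + 1) → K} (hμ : Function.Injective μ) (p : Fin (m + 1))
    (g : K → M) :
    divDiff μ (fun z => (z - μ p) • g z) = divDiff (μ ∘ p.succAbove) g := by
  rw [divDiff, Fin.sum_univ_succAbove _ p, sub_self, zero_smul, smul_zero, zero_add]
  refine sum_congr rfl fun i _ => ?_
  have hne : μ (p.succAbove i) - μ p ≠ 0 := sub_ne_zero.2 (hμ.ne (p.succAbove_ne i))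
  rw [nodalWeight_succAbove, smul_smul, mul_comm, ← mul_assoc, mul_inv_cancel₀ hne, one_mul]
  rfl

lemma divDiff_pow_succ {μ : Fin (m + 1) → K} (hμ : Function.Injective μ) (p : Fin (m + 1))
    (k : ℕ) :
    divDiff μ (· ^ (k + 1)) = μ p * divDiff μ (· ^ k) + divDiff (μ ∘ p.succAbove) (· ^ k) := by
  rw [← divDiff_sub_node_smul hμ p]
  simp only [divDiff, smul_eq_mul, mul_sum, ← sum_add_distrib]
  exact sum_congr rfl fun i _ => by ring

lemma divDiff_pow {μ : Fin (m + 1) → K} (hμ : Function.Injective μ) (k : ℕ) :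
    divDiff μ (· ^ k) = if k < m then 0 else completeSymm μ (k - m) := by
  induction m generalizing k with
  | zero =>
    simp [divDiff, nodalWeight, completeSymm_fin_one]
  | succ m ih =>
    have htail : μ ∘ Fin.succAbove 0 = Fin.tail μ := rfl
    -- removing the first or the last node leaves the same lower-order term
    have hzero : divDiff μ (· ^ 0) = 0 := by
      have h₀ := divDiff_pow_succ hμ 0 0
      have h₁ := divDiff_pow_succ hμ (Fin.last _) 0
      simp only [ih (hμ.comp Fin.succAbove_right_injective), Nat.zero_sub, completeSymm_zero]
        at h₀ h₁
      have hne : μ 0 - μ (Fin.last _) ≠ 0 := sub_ne_zero.2 (hμ.ne Fin.last_pos.ne)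
      have hmul : (μ 0 - μ (Fin.last _)) * divDiff μ (· ^ 0) = 0 := by
        linear_combination h₁ - h₀
      exact (mul_eq_zero.1 hmul).resolve_left hne
    induction k with
    | zero => simpa using hzero
    | succ k ihk =>
      rw [divDiff_pow_succ hμ 0, ihk, htail, ih (μ := Fin.tail μ) (hμ.comp (Fin.succ_injective _))]
      rcases lt_trichotomy k m with h | rfl | h
      · simp [h, h.trans (Nat.lt_succ_self m)]
      · simp
      · obtain ⟨r, rfl⟩ := Nat.exists_eq_add_of_lt h
        rw [if_neg (by omega), if_neg (by omega), if_neg (by omega),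
          show m + r + 1 - (m + 1) = r by omega, show m + r + 1 - m = r + 1 by omega,
          show m + r + 1 + 1 - (m + 1) = r + 1 by omega, completeSymm_succ μ, add_comm]

lemma divDiff_apply {α : Type*} (μ : Fin m → K) (g : K → α → M) (x : α) :
    divDiff μ g x = divDiff μ (fun z => g z x) := by
  simp only [divDiff, Finset.sum_apply, Pi.smul_apply]

lemma exists_ne_zero_divDiff_castLE_sub_smul_mem_span {n : ℕ} {l : Fin n → K}
    (hl : Function.Injective l) (g : K → M) (s : Fin n) :
    ∃ c : K, c ≠ 0 ∧
      divDiff (l ∘ Fin.castLE s.isLt) g - c • g (l s) ∈ span K ((g ∘ l) '' Set.Iio s) := by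
  refine ⟨nodalWeight univ (l ∘ Fin.castLE s.isLt) (Fin.last s),
    nodalWeight_ne_zero (hl.comp (Fin.castLE_injective _)).injOn (mem_univ _), ?_⟩
  rw [divDiff, Fin.sum_univ_castSucc, Function.comp_apply,
    show Fin.castLE s.isLt (Fin.last s) = s from Fin.ext (by simp), add_sub_cancel_right]
  exact sum_mem fun i _ => smul_mem _ _
    (subset_span ⟨Fin.castLE s.isLt i.castSucc, Fin.lt_def.2 (by simp), rfl⟩)

end DividedDifference

lemma hasSum_divDiff_cexp {m : ℕ} (μ : Fin m → ℂ) (x : ℂ) :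
    HasSum (fun k => x ^ k / k ! * divDiff μ (· ^ k)) (divDiff μ fun z => Complex.exp (z * x)) := by
  have h := hasSum_sum fun i (_ : i ∈ univ) =>
    (NormedSpace.expSeries_div_hasSum_exp (μ i * x)).mul_left (nodalWeight univ μ i)
  simp only [← Complex.exp_eq_exp_ℂ] at h
  refine h.congr_fun fun k => ?_
  simp only [divDiff, smul_eq_mul, mul_sum]
  exact sum_congr rfl fun i _ => by ring

lemma factorial_mul_multichoose_mul_factorial (m k : ℕ) :
    m ! * (m + 1).multichoose k * k ! = (k + m)! := by
  rw [Nat.multichoose_eq, show m + 1 + k - 1 = m + k by omega, mul_comm (m !), add_comm k,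
    Nat.add_choose_mul_factorial_mul_factorial]

lemma norm_factorial_mul_divDiff_cexp_sub_pow_le {m : ℕ} {μ : Fin (m + 1) → ℂ}
    (hμ : Function.Injective μ) {ε R : ℝ} (hμε : ∀ i, ‖μ i‖ ≤ ε) {x : ℂ} (hx : ‖x‖ ≤ R) :
    ‖m ! * divDiff μ (fun z => Complex.exp (z * x)) - x ^ m‖ ≤ R ^ m * (Real.exp (R * ε) - 1) := by
  have hε : 0 ≤ ε := (norm_nonneg _).trans (hμε 0)
  have hR : 0 ≤ R := (norm_nonneg _).trans hx
  have hshift : HasSum (fun r => x ^ (r + m) / (r + m)! * completeSymm μ r)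
      (divDiff μ fun z => Complex.exp (z * x)) := by
    have h := (hasSum_nat_add_iff' m).2 (hasSum_divDiff_cexp μ x)
    rw [sum_eq_zero fun k hk => by rw [divDiff_pow hμ, if_pos (mem_range.1 hk), mul_zero],
      sub_zero] at h
    refine h.congr_fun fun r => ?_
    rw [divDiff_pow hμ, if_neg (by omega), Nat.add_sub_cancel]
  have htail := ((hasSum_nat_add_iff' 1).2 hshift).mul_left (m ! : ℂ)
  have hexp := ((hasSum_nat_add_iff' 1).2
    (NormedSpace.expSeries_div_hasSum_exp (R * ε))).mul_left (R ^ m)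
  rw [← Real.exp_eq_exp_ℝ, sum_range_one, pow_zero, Nat.factorial_zero, Nat.cast_one,
    div_one] at hexp
  rw [sum_range_one, zero_add, completeSymm_zero, mul_one, mul_sub,
    mul_div_cancel₀ _ (Nat.cast_ne_zero.2 (Nat.factorial_ne_zero m))] at htail
  refine htail.norm_le_of_bounded hexp fun r => ?_
  have hfac : (m ! : ℝ) * (m + 1).multichoose (r + 1) / (r + 1 + m)! = 1 / (r + 1)! := by
    rw [div_eq_div_iff (by positivity) (by positivity), one_mul, ← Nat.cast_mul, ← Nat.cast_mul,
      factorial_mul_multichoose_mul_factorial]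
  calc ‖(m ! : ℂ) * (x ^ (r + 1 + m) / (r + 1 + m)! * completeSymm μ (r + 1))‖
      ≤ m ! * (R ^ (r + 1 + m) / (r + 1 + m)! * ((m + 1).multichoose (r + 1) * ε ^ (r + 1))) := by
        simp only [norm_mul, norm_div, norm_pow, Complex.norm_natCast]
        gcongr
        exact norm_completeSymm_le μ hε hμε _
    _ = R ^ m * ((R * ε) ^ (r + 1) / (r + 1)!) := by
        rw [div_eq_mul_one_div _ ((r + 1)! : ℝ), ← hfac]
        ring

lemma L2norm_le_of_forall_norm_le_s13 {g : ℝ → ℂ} {B : ℝ}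
    (h : ∀ x ∈ Set.Icc (-Real.pi) Real.pi, ‖g x‖ ≤ B) :
    L2norm g ≤ √(2 * Real.pi) * B := by
  have hπ := Real.pi_pos
  have hB : 0 ≤ B := (norm_nonneg _).trans (h 0 ⟨by linarith, hπ.le⟩)
  have hint :
      ∫ x in Set.Icc (-Real.pi) Real.pi, ‖g x‖ ^ 2 ≤ ∫ _ in Set.Icc (-Real.pi) Real.pi, B ^ 2 :=
    integral_mono_of_nonneg (ae_of_all _ fun _ => by positivity) (integrableOn_const (by simp))
      (ae_restrict_of_forall_mem measurableSet_Icc fun x hx =>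
        pow_le_pow_left₀ (norm_nonneg _) (h x hx) 2)
  rw [setIntegral_const, Real.volume_real_Icc_of_le (by linarith), smul_eq_mul] at hint
  calc L2norm g ≤ √((Real.pi - -Real.pi) * B ^ 2) := Real.sqrt_le_sqrt hint
    _ = √(2 * Real.pi) * B := by
      rw [Real.sqrt_mul (by linarith), Real.sqrt_sq hB, two_mul, sub_neg_eq_add]

lemma exists_pos_mul_exp_mul_sub_one_lt (C a : ℝ) {δ : ℝ} (hδ : 0 < δ) :
    ∃ ε > 0, C * (Real.exp (a * ε) - 1) < δ := by
  have hcont : Continuous fun ε => C * (Real.exp (a * ε) - 1) := by fun_prop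
  have hnear : ∀ᶠ ε in 𝓝 0, C * (Real.exp (a * ε) - 1) < δ :=
    (hcont.tendsto 0).eventually (gt_mem_nhds (by simpa using hδ))
  have hpos : ∀ᶠ ε in 𝓝[>] (0 : ℝ), 0 < ε := self_mem_nhdsWithin
  exact ((hnear.filter_mono nhdsWithin_le_nhds).and hpos).exists.imp fun _ h => ⟨h.2, h.1⟩

noncomputable def expChar (a : ℂ) : Multiplicative ℝ →* ℂ where
  toFun x := Complex.exp (a * x.toAdd)
  map_one' := by simp
  map_mul' x y := by simp [mul_add, Complex.exp_add]

lemma expChar_injective : Function.Injective expChar := by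
  intro a b hab
  have hderiv (c : ℂ) : HasDerivAt (fun x : ℝ => Complex.exp (c * x)) c 0 := by
    simpa using (((hasDerivAt_id (0 : ℂ)).const_mul c).cexp).comp_ofReal
  have hfun : (fun x : ℝ => Complex.exp (a * x)) = fun x : ℝ => Complex.exp (b * x) :=
    funext fun x => DFunLike.congr_fun hab (Multiplicative.ofAdd x)
  exact (hderiv a).unique (hfun ▸ hderiv b)

lemma linearIndependent_cexp_mul {ι : Type*} {l : ι → ℂ} (hl : Function.Injective l) :
    LinearIndependent ℂ fun i (x : ℝ) => Complex.exp (l i * x) :=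
  (linearIndependent_monoidHom (Multiplicative ℝ) ℂ).comp _ (expChar_injective.comp hl)

lemma span_range_eq_of_triangular {ι K M : Type*} [Preorder ι] [WellFoundedLT ι] [DivisionRing K]
    [AddCommGroup M] [Module K M] {e f : ι → M}
    (h : ∀ s, ∃ c : K, c ≠ 0 ∧ f s - c • e s ∈ span K (e '' Set.Iio s)) :
    span K (Set.range f) = span K (Set.range e) := by
  have hmono (s : ι) : span K (e '' Set.Iio s) ≤ span K (Set.range e) :=
    span_mono (Set.image_subset_range _ _)
  apply le_antisymm
  · rw [span_le]
    rintro _ ⟨s, rfl⟩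
    obtain ⟨c, -, hc⟩ := h s
    simpa using add_mem (hmono s hc) (smul_mem _ c (subset_span (Set.mem_range_self s)))
  · rw [span_le]
    rintro _ ⟨s, rfl⟩
    induction s using WellFoundedLT.induction with
    | ind s ih =>
      obtain ⟨c, hc0, hc⟩ := h s
      have hlow : span K (e '' Set.Iio s) ≤ span K (Set.range f) := by
        rw [span_le]
        rintro _ ⟨t, ht, rfl⟩
        exact ih t ht
      have hes : e s = c⁻¹ • (f s - (f s - c • e s)) := by
        rw [sub_sub_cancel, smul_smul, inv_mul_cancel₀ hc0, one_smul]
      rw [hes]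
      exact smul_mem _ _ (sub_mem (subset_span (Set.mem_range_self s)) (hlow hc))

lemma LinearIndependent.of_span_range_eq {ι K M : Type*} [Fintype ι] [DivisionRing K]
    [AddCommGroup M] [Module K M] {e f : ι → M} (he : LinearIndependent K e)
    (h : span K (Set.range f) = span K (Set.range e)) : LinearIndependent K f := by
  rw [linearIndependent_iff_card_eq_finrank_span] at he ⊢
  rwa [Set.finrank, h]

theorem stmt13_general (n : ℕ) :
    ∀ δ > (0 : ℝ), ∃ ε₀ > (0 : ℝ), ∀ l : Fin n → ℂ, Function.Injective l →
      (∀ i, ‖l i‖ < ε₀) →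
      ∃ f : Fin n → (ℝ → ℂ),
        LinearIndependent ℂ f ∧
        Submodule.span ℂ (Set.range f) =
          Submodule.span ℂ
            (Set.range fun i : Fin n => fun x : ℝ => Complex.exp (l i * x)) ∧
        ∀ s : Fin n, L2norm (fun x : ℝ => f s x - (x : ℂ) ^ (s : ℕ)) < δ := by
  intro δ hδ
  obtain ⟨ε₀, hε₀, hsmall⟩ :=
    exists_pos_mul_exp_mul_sub_one_lt (√(2 * Real.pi) * Real.pi ^ n) Real.pi hδ
  refine ⟨ε₀, hε₀, fun l hl hlε => ?_⟩
  let expFun (z : ℂ) (x : ℝ) : ℂ := Complex.exp (z * x)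
  let f (s : Fin n) : ℝ → ℂ := ((s : ℕ)! : ℂ) • divDiff (l ∘ Fin.castLE s.isLt) expFun
  have hspan : span ℂ (Set.range f) = span ℂ (Set.range (expFun ∘ l)) := by
    refine span_range_eq_of_triangular fun s => ?_
    obtain ⟨c, hc, hmem⟩ := exists_ne_zero_divDiff_castLE_sub_smul_mem_span hl expFun s
    refine ⟨((s : ℕ)! : ℂ) * c, mul_ne_zero (Nat.cast_ne_zero.2 (Nat.factorial_ne_zero _)) hc, ?_⟩
    rw [mul_smul, ← smul_sub]
    exact smul_mem _ _ hmem
  refine ⟨f, (linearIndependent_cexp_mul hl).of_span_range_eq hspan, hspan, fun s => ?_⟩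
  have hexp : 0 ≤ Real.exp (Real.pi * ε₀) - 1 := sub_nonneg.2 (Real.one_le_exp (by positivity))
  calc L2norm (fun x : ℝ => f s x - (x : ℂ) ^ (s : ℕ))
      ≤ √(2 * Real.pi) * (Real.pi ^ (s : ℕ) * (Real.exp (Real.pi * ε₀) - 1)) := by
        refine L2norm_le_of_forall_norm_le_s13 fun x hx => ?_
        simp only [f, Pi.smul_apply, divDiff_apply, smul_eq_mul]
        exact norm_factorial_mul_divDiff_cexp_sub_pow_le (hl.comp (Fin.castLE_injective _))
          (fun i => (hlε _).le) (by simpa [abs_le] using hx)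
    _ ≤ √(2 * Real.pi) * (Real.pi ^ n * (Real.exp (Real.pi * ε₀) - 1)) := by
        gcongr
        exacts [by linarith [Real.pi_gt_three], s.isLt.le]
    _ < δ := by rwa [← mul_assoc]

/-- Theorem 3.3: for every `δ > 0` there is `ε₀ > 0` such that whenever
`λ₁, …, λₙ` are mutually distinct complex numbers with `|λᵢ| < ε₀`, the
`n`-dimensional subspace `L = Span(e^{λ₁ x}, …, e^{λₙ x})` has a basis
`f₁, …, fₙ` (linearly independent and spanning `L`) with
`‖f_s(x) − x^{s-1}‖_{L²([-π,π])} < δ` for all `s`; consequently, as all `λᵢ → 0`,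
`L` converges to `M = Span(1, x, …, x^{n-1})` in the sense of convergence of
subspaces of a Hilbert space. -/
theorem stmt13 (n : ℕ) (hn : 1 ≤ n) :
    ∀ δ > (0 : ℝ), ∃ ε₀ > (0 : ℝ), ∀ l : Fin n → ℂ, Function.Injective l →
      (∀ i, ‖l i‖ < ε₀) →
      ∃ f : Fin n → (ℝ → ℂ),
        LinearIndependent ℂ f ∧
        Submodule.span ℂ (Set.range f) =
          Submodule.span ℂ
            (Set.range fun i : Fin n => fun x : ℝ => Complex.exp (l i * x)) ∧
        ∀ s : Fin n, L2norm (fun x : ℝ => f s x - (x : ℂ) ^ (s : ℕ)) < δ :=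
  stmt13_general n
end
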